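/- Let d ≤ n with n ≥ 2 and let {E_i}_{i=1}^n be an equiangular POVM on ℂ^d, i.e., E_i = (d/n)Π_i where each Π_i is a rank-one orthogonal projection, tr(Π_i Π_j) = (n−d)/(d(n−1)) for all i ≠ j, and Σ_i E_i = I. Then its orthogonality satisfies O = Σ_{i,j} (tr(√E_i √E_j))² − 2d + n = (n−d)²/(n−1). -/

import Mathlib

/-! Since `Π` is a projection, `(√c • Π)² = c • Π`, so by uniqueness of positive square roots
`√((d/n) • Π_i) = √(d/n) • Π_i` and `tr(√E_i √E_j) = (d/n) tr(Π_i Π_j)`: this is `d/n` on the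
diagonal and `(n - d)/(n(n - 1))` off it, and the orthogonality becomes an explicit rational
function of `n` and `d`. -/

open Matrix BigOperators
open scoped ComplexOrder

/-- The positive semidefinite square root of a positive semidefinite matrix
(the definition `Matrix.PosSemidef.sqrt` of the older Mathlib, since removed). -/
noncomputable def Matrix.PosSemidef.sqrt {n : Type*} [Fintype n] [DecidableEq n] {𝕜 : Type*}
    [RCLike 𝕜] {A : Matrix n n 𝕜} (hA : A.PosSemidef) : Matrix n n 𝕜 :=
  hA.1.eigenvectorUnitary * diagonal ((fun x : ℝ => (x : 𝕜)) ∘ Real.sqrt ∘ hA.1.eigenvalues) *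
    (star hA.1.eigenvectorUnitary : Matrix n n 𝕜)

lemma Fintype.sum_sum_ite_eq_const {ι R : Type*} [Fintype ι] [DecidableEq ι] [CommRing R]
    (a b : R) :
    ∑ i : ι, ∑ j : ι, (if i = j then a else b) =
      Fintype.card ι * a + Fintype.card ι * (Fintype.card ι - 1) * b := by
  have hrow (i : ι) : ∑ j : ι, (if i = j then a else b) = a - b + Fintype.card ι * b := by
    calc ∑ j : ι, (if i = j then a else b) = ∑ j : ι, ((if i = j then a - b else 0) + b) :=
          Finset.sum_congr rfl fun j _ => by split_ifs <;> ring
      _ = a - b + Fintype.card ι * b := by simp [Finset.sum_add_distrib]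
  simp only [hrow, Finset.sum_const, Finset.card_univ, nsmul_eq_mul]
  ring

section StarProjection

variable {A : Type*} [PartialOrder A] [NonUnitalRing A] [TopologicalSpace A] [StarRing A]
  [Module ℝ A] [SMulCommClass ℝ A A] [IsScalarTower ℝ A A] [StarModule ℝ A] [StarOrderedRing A]
  [NonUnitalContinuousFunctionalCalculus ℝ A IsSelfAdjoint] [NonnegSpectrumClass ℝ A]
  [IsSemitopologicalRing A] [T2Space A]

lemma IsStarProjection.sqrt_smul {p : A} (hp : IsStarProjection p) {c : ℝ} (hc : 0 ≤ c) :
    CFC.sqrt (c • p) = √c • p := by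
  refine CFC.sqrt_unique ?_ (smul_nonneg (Real.sqrt_nonneg c) hp.nonneg)
  rw [smul_mul_smul_comm, hp.isIdempotentElem.eq, Real.mul_self_sqrt hc]

end StarProjection

namespace Matrix.PosSemidef

open scoped MatrixOrder

variable {n 𝕜 : Type*} [Fintype n] [DecidableEq n] [RCLike 𝕜]

lemma sqrt_eq_cfcSqrt {A : Matrix n n 𝕜} (hA : A.PosSemidef) : hA.sqrt = CFC.sqrt A := by
  rw [CFC.sqrt_eq_real_sqrt A hA.nonneg, cfcₙ_eq_cfc, hA.1.cfc_eq, IsHermitian.cfc,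
    Unitary.conjStarAlgAut_apply]
  rfl

lemma sqrt_eq_sqrt_smul_of_eq_smul {A P : Matrix n n 𝕜} (hA : A.PosSemidef)
    (hP : IsStarProjection P) {c : ℝ} (hc : 0 ≤ c) (hAP : A = c • P) :
    hA.sqrt = √c • P := by
  rw [hA.sqrt_eq_cfcSqrt, hAP, hP.sqrt_smul hc]

end Matrix.PosSemidef

theorem ea_povm_orthogonality_general
    (d n : ℕ) (hn : 2 ≤ n)
    (P : Fin n → Matrix (Fin d) (Fin d) ℂ)
    (hproj : ∀ i, (P i).IsHermitian ∧ P i * P i = P i ∧ (P i).trace = 1)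
    (hangle : ∀ i j, i ≠ j →
      (P i * P j).trace = ((((n : ℝ) - d) / ((d : ℝ) * ((n : ℝ) - 1)) : ℝ) : ℂ))
    (E : Fin n → Matrix (Fin d) (Fin d) ℂ)
    (hEdef : ∀ i, E i = ((d : ℂ) / (n : ℂ)) • P i)
    (hE : ∀ i, (E i).PosSemidef) :
    ∑ i, ∑ j, (((hE i).sqrt * (hE j).sqrt).trace.re) ^ 2 - 2 * (d : ℝ) + (n : ℝ)
      = ((n : ℝ) - d) ^ 2 / ((n : ℝ) - 1) := by
  have hd : d ≠ 0 := by
    rintro rfl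
    simpa using (hproj ⟨0, by omega⟩).2.2
  have hn1 : (n : ℝ) - 1 ≠ 0 := by
    have : (2 : ℝ) ≤ n := by exact_mod_cast hn
    linarith
  set q : ℝ := d / n
  set c : ℝ := ((n : ℝ) - d) / ((d : ℝ) * ((n : ℝ) - 1))
  have hsqrt (i : Fin n) : (hE i).sqrt = √q • P i :=
    (hE i).sqrt_eq_sqrt_smul_of_eq_smul ⟨(hproj i).2.1, (hproj i).1.isSelfAdjoint⟩
      (by positivity) (by simp [hEdef i, q, ← Complex.coe_smul])
  have hterm (i j : Fin n) :
      (((hE i).sqrt * (hE j).sqrt).trace.re) ^ 2 = if i = j then q ^ 2 else (q * c) ^ 2 := by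
    rw [hsqrt i, hsqrt j, smul_mul_smul_comm, Real.mul_self_sqrt (by positivity), trace_smul]
    split_ifs with hij
    · simp [hij, (hproj j).2.1, (hproj j).2.2]
    · simp [hangle i j hij]
  simp only [hterm, Fintype.sum_sum_ite_eq_const, Fintype.card_fin, q, c]
  field_simp
  ring

/-- For an equiangular POVM `{E_i = (d/n)Π_i}` on `ℂ^d` (with `d ≤ n`, `n ≥ 2`,
each `Π_i` a rank-one orthogonal projection, `tr(Π_i Π_j) = (n−d)/(d(n−1))` for `i ≠ j`,
and `Σ_i E_i = I`), the orthogonality satisfies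
`O = Σ_{i,j} (tr(√E_i √E_j))² − 2d + n = (n−d)²/(n−1)`. -/
theorem ea_povm_orthogonality
    (d n : ℕ) (hdn : d ≤ n) (hn : 2 ≤ n)
    (P : Fin n → Matrix (Fin d) (Fin d) ℂ)
    (hproj : ∀ i, (P i).IsHermitian ∧ P i * P i = P i ∧ (P i).trace = 1)
    (hangle : ∀ i j, i ≠ j →
      (P i * P j).trace = ((((n : ℝ) - d) / ((d : ℝ) * ((n : ℝ) - 1)) : ℝ) : ℂ))
    (E : Fin n → Matrix (Fin d) (Fin d) ℂ)
    (hEdef : ∀ i, E i = ((d : ℂ) / (n : ℂ)) • P i)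
    (hE : ∀ i, (E i).PosSemidef)
    (hsum : ∑ i, E i = 1) :
    ∑ i, ∑ j, (((hE i).sqrt * (hE j).sqrt).trace.re) ^ 2 - 2 * (d : ℝ) + (n : ℝ)
      = ((n : ℝ) - d) ^ 2 / ((n : ℝ) - 1) :=
  ea_povm_orthogonality_general d n hn P hproj hangle E hEdef hE
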